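/- Let n ≥ 5 and let L = F1(α_4,…,α_n,θ) be an n-dimensional complex filiform Leibniz algebra of the first family. For any pre-derivation P of L, writing P(e_1) = Σ_{t=1}^n a_t e_t and P(e_2) = Σ_{t=1}^n b_t e_t in the basis e_1,…,e_n, one has b_1 + b_2 = a_1 + a_2 and b_t = a_t for all 3 ≤ t ≤ n−2; moreover P(e_4) = (3a_1 + a_2) e_4 + Σ_{t=5}^{n} (a_{t−2} + 2 a_2 α_{t−1}) e_t. -/

import Mathlib

open Finset

/-- The basis vector `e_i` (1-indexed) of `ℂ^n`; zero if `i` is out of range. -/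
noncomputable def E (n : ℕ) (i : ℕ) : Fin n → ℂ :=
  if h : 1 ≤ i ∧ i ≤ n then Pi.single (⟨i - 1, by omega⟩ : Fin n) 1 else 0

/-- The bilinear bracket on `ℂ^n` determined by the products `m i j` of the
(1-indexed) basis vectors `e_i`, `e_j`. -/
noncomputable def bracketOf (n : ℕ) (m : ℕ → ℕ → Fin n → ℂ)
    (x y : Fin n → ℂ) : Fin n → ℂ :=
  ∑ i : Fin n, ∑ j : Fin n, (x i * y j) • m (i.1 + 1) (j.1 + 1)

/-- `P` is a pre-derivation of the algebra with bracket `br`. -/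
def IsPreDeriv (n : ℕ) (br : (Fin n → ℂ) → (Fin n → ℂ) → Fin n → ℂ)
    (P : Module.End ℂ (Fin n → ℂ)) : Prop :=
  ∀ x y z, P (br (br x y) z) =
    br (br (P x) y) z + br (br x (P y)) z + br (br x y) (P z)

/-- Multiplication table of the first family `F1(α₄,…,αₙ,θ)` of filiform Leibniz
algebras: `[e₁,e₁]=e₃`; `[eᵢ,e₁]=e_{i+1}` for `2 ≤ i ≤ n-1`;
`[e₁,e₂]=∑_{t=4}^{n-1} α_t e_t + θ eₙ`; `[eⱼ,e₂]=∑_{t=j+2}^{n} α_{t-j+2} e_t`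
for `2 ≤ j ≤ n-2`; all other products zero. -/
noncomputable def F1mul (n : ℕ) (α : ℕ → ℂ) (θ : ℂ) (i j : ℕ) : Fin n → ℂ :=
  if i = 1 ∧ j = 1 then E n 3
  else if 2 ≤ i ∧ i ≤ n - 1 ∧ j = 1 then E n (i + 1)
  else if i = 1 ∧ j = 2 then (∑ t ∈ Icc 4 (n - 1), α t • E n t) + θ • E n n
  else if 2 ≤ i ∧ i ≤ n - 2 ∧ j = 2 then ∑ t ∈ Icc (i + 2) n, α (t - i + 2) • E n t
  else 0

/-!
Since `[e₁,e₁] = [e₂,e₁] = e₃`, the pre-derivation identity on the triples `(e₁,e₁,e₁)` and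
`(e₂,e₁,e₁)` gives two expressions for `P(e₄)`. Their middle terms agree, because
`[[e₁,x],e₁] = [[e₂,x],e₁] = [e₃,x]`: the products `[e₁,e₂]` and `[e₂,e₂]` differ only in
`eₙ`, which right multiplication `R = [·,e₁]` kills. Hence `R²(P e₁) = R²(P e₂)`, and `R²`
shifts coordinates up by two while merging the first two into the coefficient of `e₄`; comparing
coefficients gives the relations between `a` and `b`, and the `(e₁,e₁,e₁)` expression is the
formula for `P(e₄)`.
-/

lemma E_apply (n i : ℕ) (k : Fin n) : E n i k = if (k : ℕ) + 1 = i then 1 else 0 := by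
  by_cases h : 1 ≤ i ∧ i ≤ n
  · rw [E, dif_pos h, Pi.single_apply]
    exact if_congr (by simp only [Fin.ext_iff]; omega) rfl rfl
  · rw [E, dif_neg h, Pi.zero_apply, if_neg (by omega)]

lemma E_of_lt {n i : ℕ} (h : n < i) : E n i = 0 := by
  simp [E, show ¬ i ≤ n by omega]

lemma sum_Icc_smul_E_apply (n p q : ℕ) (f : ℕ → ℂ) (k : Fin n) :
    (∑ t ∈ Icc p q, f t • E n t) k = if (k : ℕ) + 1 ∈ Icc p q then f ((k : ℕ) + 1) else 0 := by
  simp [Finset.sum_apply, E_apply]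

lemma sum_Icc_eq_add_sum_Icc_succ {M : Type*} [AddCommMonoid M] {a b : ℕ} (h : a ≤ b)
    (f : ℕ → M) : ∑ t ∈ Icc a b, f t = f a + ∑ t ∈ Icc (a + 1) b, f t := by
  rw [← add_sum_Ioc_eq_sum_Icc h, Icc_add_one_left_eq_Ioc]

lemma sum_Icc_smul_E_succ (n p q : ℕ) (d : ℕ → ℂ) :
    ∑ t ∈ Icc p q, d t • E n (t + 1) = ∑ t ∈ Icc (p + 1) (q + 1), d (t - 1) • E n t := by
  rw [← map_add_right_Icc, sum_map]
  simp

lemma eq_of_smul_E_add_sum_Icc_eq {n k : ℕ} (hk : 1 ≤ k) (hkn : k ≤ n) {u v : ℂ}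
    {f g : ℕ → ℂ}
    (h : u • E n k + ∑ t ∈ Icc (k + 1) n, f t • E n t =
      v • E n k + ∑ t ∈ Icc (k + 1) n, g t • E n t) :
    u = v ∧ ∀ t ∈ Icc (k + 1) n, f t = g t := by
  constructor
  · simpa [E_apply, sum_Icc_smul_E_apply, Nat.sub_add_cancel hk] using
      congrFun h ⟨k - 1, by omega⟩
  · intro t ht
    rw [mem_Icc] at ht
    simpa [E_apply, sum_Icc_smul_E_apply, Nat.sub_add_cancel (by omega : 1 ≤ t),
      show t ≠ k by omega, ht.2, ht.1] using congrFun h ⟨t - 1, by omega⟩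

section bracketOf

variable {n : ℕ} (m : ℕ → ℕ → Fin n → ℂ)

lemma bracketOf_apply (x y : Fin n → ℂ) (k : Fin n) :
    bracketOf n m x y k = ∑ i, ∑ j, x i * y j * m (i + 1) (j + 1) k := by
  simp [bracketOf, Finset.sum_apply]

noncomputable def bracketOfₗ : (Fin n → ℂ) →ₗ[ℂ] (Fin n → ℂ) →ₗ[ℂ] Fin n → ℂ :=
  LinearMap.mk₂ ℂ (bracketOf n m)
    (fun x x' y => by ext k; simp [bracketOf_apply, add_mul, sum_add_distrib])
    (fun c x y => by ext k; simp [bracketOf_apply, mul_sum, mul_assoc])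
    (fun x y y' => by ext k; simp [bracketOf_apply, mul_add, add_mul, sum_add_distrib])
    (fun c x y => by
      ext k
      simp only [bracketOf_apply, Pi.smul_apply, smul_eq_mul, mul_sum]
      exact sum_congr rfl fun _ _ => sum_congr rfl fun _ _ => by ring)

lemma bracketOfₗ_apply (x y : Fin n → ℂ) : bracketOfₗ m x y = bracketOf n m x y := rfl

lemma bracketOf_E_E {p q : ℕ} (hp : 1 ≤ p) (hpn : p ≤ n) (hq : 1 ≤ q) (hqn : q ≤ n) :
    bracketOf n m (E n p) (E n q) = m p q := by
  ext k
  rw [bracketOf_apply, sum_eq_single ⟨p - 1, by omega⟩, sum_eq_single ⟨q - 1, by omega⟩]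
  · simp [E_apply, Nat.sub_add_cancel hp, Nat.sub_add_cancel hq]
  · intro j _ hj
    have : (j : ℕ) + 1 ≠ q := fun h => hj (Fin.ext (by simp only; omega))
    simp [E_apply, this]
  · simp
  · intro i _ hi
    have : (i : ℕ) + 1 ≠ p := fun h => hi (Fin.ext (by simp only; omega))
    simp [E_apply, this]
  · simp

variable {m}

lemma bracketOf_add_left (x x' y : Fin n → ℂ) :
    bracketOf n m (x + x') y = bracketOf n m x y + bracketOf n m x' y :=
  (bracketOfₗ m).map_add₂ x x' y

lemma bracketOf_smul_left (c : ℂ) (x y : Fin n → ℂ) :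
    bracketOf n m (c • x) y = c • bracketOf n m x y :=
  (bracketOfₗ m).map_smul₂ c x y

lemma bracketOf_sum_smul_E_E {s : Finset ℕ} (hs : ∀ t ∈ s, 1 ≤ t ∧ t ≤ n) {q : ℕ}
    (hq : 1 ≤ q) (hqn : q ≤ n) (d : ℕ → ℂ) :
    bracketOf n m (∑ t ∈ s, d t • E n t) (E n q) = ∑ t ∈ s, d t • m t q := by
  rw [← bracketOfₗ_apply, LinearMap.map_sum₂]
  refine sum_congr rfl fun t ht => ?_
  rw [LinearMap.map_smul₂, bracketOfₗ_apply, bracketOf_E_E m (hs t ht).1 (hs t ht).2 hq hqn]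

lemma bracketOf_E_sum_smul_E {p : ℕ} (hp : 1 ≤ p) (hpn : p ≤ n) {s : Finset ℕ}
    (hs : ∀ t ∈ s, 1 ≤ t ∧ t ≤ n) (d : ℕ → ℂ) :
    bracketOf n m (E n p) (∑ t ∈ s, d t • E n t) = ∑ t ∈ s, d t • m p t := by
  rw [← bracketOfₗ_apply, map_sum]
  refine sum_congr rfl fun t ht => ?_
  rw [map_smul, bracketOfₗ_apply, bracketOf_E_E m hp hpn (hs t ht).1 (hs t ht).2]

end bracketOf

section F1

variable {n : ℕ} {α : ℕ → ℂ} {θ : ℂ}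

local notation "μ" => bracketOf n (F1mul n α θ)

lemma F1mul_one_one : F1mul n α θ 1 1 = E n 3 := by
  simp [F1mul]

-- For `p ≥ n` both sides vanish, `E n (p + 1)` being out of range.
lemma F1mul_one_right {p : ℕ} (hp : 2 ≤ p) : F1mul n α θ p 1 = E n (p + 1) := by
  unfold F1mul
  split_ifs <;> first | omega | rfl | exact (E_of_lt (by omega)).symm

lemma F1mul_eq_zero_of_three_le {p q : ℕ} (hq : 3 ≤ q) : F1mul n α θ p q = 0 := by
  unfold F1mul
  split_ifs <;> first | omega | rfl

lemma F1mul_two_two (hn : 4 ≤ n) : F1mul n α θ 2 2 = ∑ t ∈ Icc 4 n, α t • E n t := by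
  rw [F1mul, if_neg (by omega), if_neg (by omega), if_neg (by omega),
    if_pos ⟨le_rfl, by omega, rfl⟩]
  exact sum_congr rfl fun t ht => by rw [Nat.sub_add_cancel (by rw [mem_Icc] at ht; omega)]

lemma F1mul_three_two (hn : 5 ≤ n) : F1mul n α θ 3 2 = ∑ t ∈ Icc 5 n, α (t - 1) • E n t := by
  rw [F1mul, if_neg (by omega), if_neg (by omega), if_neg (by omega),
    if_pos ⟨by norm_num, by omega, rfl⟩]
  exact sum_congr rfl fun t ht => by rw [show t - 3 + 2 = t - 1 by rw [mem_Icc] at ht; omega]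

lemma F1mul_one_two (hn : 4 ≤ n) :
    F1mul n α θ 1 2 = F1mul n α θ 2 2 + (θ - α n) • E n n := by
  obtain ⟨k, rfl⟩ : ∃ k, n = k + 1 := ⟨n - 1, by omega⟩
  rw [F1mul_two_two hn, sum_Icc_succ_top (by omega)]
  simp [F1mul, sub_smul]

lemma F1_bracket_sum_Icc_E_one {p : ℕ} (hp : 2 ≤ p) (hpn : p ≤ n) (d : ℕ → ℂ) :
    μ (∑ t ∈ Icc p n, d t • E n t) (E n 1) = ∑ t ∈ Icc (p + 1) n, d (t - 1) • E n t := by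
  rw [bracketOf_sum_smul_E_E (fun t ht => by rw [mem_Icc] at ht; omega) le_rfl (by omega),
    sum_congr rfl fun t ht => by rw [F1mul_one_right (hp.trans (mem_Icc.1 ht).1)],
    sum_Icc_smul_E_succ, sum_Icc_succ_top (by omega), E_of_lt (by omega), smul_zero, add_zero]

lemma F1_bracket_bracket_sum_E_one (hn : 5 ≤ n) (c : ℕ → ℂ) :
    μ (μ (∑ t ∈ Icc 1 n, c t • E n t) (E n 1)) (E n 1) =
      (c 1 + c 2) • E n 4 + ∑ t ∈ Icc 5 n, c (t - 2) • E n t := by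
  have h₁ : μ (∑ t ∈ Icc 1 n, c t • E n t) (E n 1) =
      c 1 • E n 3 + ∑ t ∈ Icc 3 n, c (t - 1) • E n t := by
    rw [sum_Icc_eq_add_sum_Icc_succ (by omega), bracketOf_add_left, bracketOf_smul_left,
      bracketOf_E_E _ le_rfl (by omega) le_rfl (by omega), F1mul_one_one,
      F1_bracket_sum_Icc_E_one le_rfl (by omega)]
  rw [h₁, bracketOf_add_left, bracketOf_smul_left,
    bracketOf_E_E _ (by norm_num) (by omega) le_rfl (by omega), F1mul_one_right (by norm_num),
    F1_bracket_sum_Icc_E_one (by norm_num) (by omega), sum_Icc_eq_add_sum_Icc_succ (by omega)]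
  simp only [Nat.sub_sub, add_smul, add_assoc]
  rfl

lemma F1_bracket_E_sum (hn : 2 ≤ n) {p : ℕ} (hp : 1 ≤ p) (hpn : p ≤ n) (c : ℕ → ℂ) :
    μ (E n p) (∑ t ∈ Icc 1 n, c t • E n t) = c 1 • F1mul n α θ p 1 + c 2 • F1mul n α θ p 2 := by
  have hsub : ({1, 2} : Finset ℕ) ⊆ Icc 1 n := by
    intro t
    simp only [mem_insert, mem_singleton, mem_Icc]
    omega
  rw [bracketOf_E_sum_smul_E hp hpn (fun t ht => mem_Icc.1 ht),
    ← sum_subset hsub fun t ht ht' => ?_, sum_pair (by norm_num)]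
  rw [mem_Icc] at ht
  simp only [mem_insert, mem_singleton] at ht'
  rw [F1mul_eq_zero_of_three_le (by omega), smul_zero]

lemma F1_bracket_E_three_sum (hn : 5 ≤ n) (c : ℕ → ℂ) :
    μ (E n 3) (∑ t ∈ Icc 1 n, c t • E n t) =
      c 1 • E n 4 + c 2 • ∑ t ∈ Icc 5 n, α (t - 1) • E n t := by
  rw [F1_bracket_E_sum (by omega) (by norm_num) (by omega), F1mul_one_right (by norm_num),
    F1mul_three_two hn]

lemma F1_bracket_bracket_E_two_sum (hn : 5 ≤ n) (c : ℕ → ℂ) :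
    μ (μ (E n 2) (∑ t ∈ Icc 1 n, c t • E n t)) (E n 1) =
      μ (E n 3) (∑ t ∈ Icc 1 n, c t • E n t) := by
  rw [F1_bracket_E_three_sum hn, F1_bracket_E_sum (by omega) (by norm_num) (by omega),
    F1mul_one_right le_rfl, F1mul_two_two (by omega), bracketOf_add_left, bracketOf_smul_left,
    bracketOf_smul_left, bracketOf_E_E _ (by norm_num) (by omega) le_rfl (by omega),
    F1mul_one_right (by norm_num), F1_bracket_sum_Icc_E_one (by norm_num) (by omega)]

lemma F1_bracket_bracket_E_one_sum (hn : 5 ≤ n) (c : ℕ → ℂ) :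
    μ (μ (E n 1) (∑ t ∈ Icc 1 n, c t • E n t)) (E n 1) =
      μ (E n 3) (∑ t ∈ Icc 1 n, c t • E n t) := by
  rw [← F1_bracket_bracket_E_two_sum hn, F1_bracket_E_sum (by omega) le_rfl (by omega),
    F1_bracket_E_sum (by omega) (by norm_num) (by omega), F1mul_one_one,
    F1mul_one_right le_rfl, F1mul_one_two (by omega), smul_add, ← add_assoc,
    bracketOf_add_left (x' := c 2 • (θ - α n) • E n n), bracketOf_smul_left, bracketOf_smul_left,
    bracketOf_E_E _ (by omega) le_rfl le_rfl (by omega), F1mul_one_right (by omega),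
    E_of_lt (lt_add_one n), smul_zero, smul_zero, add_zero]

lemma F1_isPreDeriv_apply_E_four (hn : 5 ≤ n) {P : Module.End ℂ (Fin n → ℂ)}
    (hP : IsPreDeriv n μ P) {p : ℕ} (hp : p = 1 ∨ p = 2) {c d : ℕ → ℂ}
    (hc : P (E n 1) = ∑ t ∈ Icc 1 n, c t • E n t) (hd : P (E n p) = ∑ t ∈ Icc 1 n, d t • E n t) :
    P (E n 4) = (d 1 + d 2) • E n 4 + ∑ t ∈ Icc 5 n, d (t - 2) • E n t +
      (2 : ℂ) • (c 1 • E n 4 + c 2 • ∑ t ∈ Icc 5 n, α (t - 1) • E n t) := by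
  have hp₁ : μ (E n p) (E n 1) = E n 3 := by
    rcases hp with rfl | rfl
    · rw [bracketOf_E_E _ le_rfl (by omega) le_rfl (by omega), F1mul_one_one]
    · rw [bracketOf_E_E _ (by norm_num) (by omega) le_rfl (by omega), F1mul_one_right le_rfl]
  have hpc : μ (μ (E n p) (P (E n 1))) (E n 1) = μ (E n 3) (P (E n 1)) := by
    rcases hp with rfl | rfl
    · rw [hc, F1_bracket_bracket_E_one_sum hn]
    · rw [hc, F1_bracket_bracket_E_two_sum hn]
  have h := hP (E n p) (E n 1) (E n 1)
  rw [hpc, hp₁, bracketOf_E_E _ (by norm_num) (by omega) le_rfl (by omega),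
    F1mul_one_right (by norm_num), hd, F1_bracket_bracket_sum_E_one hn, hc,
    F1_bracket_E_three_sum hn] at h
  rw [h, add_assoc, two_smul]

end F1

theorem stmt_11_general (n : ℕ) (hn : 5 ≤ n) (α : ℕ → ℂ) (θ : ℂ)
    (P : Module.End ℂ (Fin n → ℂ))
    (hP : IsPreDeriv n (bracketOf n (F1mul n α θ)) P)
    (a b : ℕ → ℂ) (ha : P (E n 1) = ∑ t ∈ Icc 1 n, a t • E n t)
    (hb : P (E n 2) = ∑ t ∈ Icc 1 n, b t • E n t) :
    b 1 + b 2 = a 1 + a 2 ∧ (∀ t, 3 ≤ t → t ≤ n - 2 → b t = a t) ∧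
      P (E n 4) = (3 * a 1 + a 2) • E n 4
        + ∑ t ∈ Icc 5 n, (a (t - 2) + 2 * a 2 * α (t - 1)) • E n t := by
  have h₁ := F1_isPreDeriv_apply_E_four hn hP (Or.inl rfl) ha ha
  have h₂ := F1_isPreDeriv_apply_E_four hn hP (Or.inr rfl) ha hb
  obtain ⟨h₁₂, hcoeff⟩ := eq_of_smul_E_add_sum_Icc_eq (k := 4) (by norm_num) (by omega)
    (add_right_cancel (h₁.symm.trans h₂))
  refine ⟨h₁₂.symm, fun t ht₃ ht₄ => ?_, ?_⟩
  · simpa using (hcoeff (t + 2) (mem_Icc.2 ⟨by omega, by omega⟩)).symm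
  · rw [h₁]
    simp only [add_smul, mul_smul, smul_add, smul_sum, sum_add_distrib]
    module

/-- For any pre-derivation `P` of a first-family filiform Leibniz algebra,
writing `P(e₁) = ∑ aₜ eₜ` and `P(e₂) = ∑ bₜ eₜ`, one has `b₁ + b₂ = a₁ + a₂`,
`bₜ = aₜ` for `3 ≤ t ≤ n-2`, and
`P(e₄) = (3a₁+a₂)e₄ + ∑_{t=5}^n (a_{t-2} + 2a₂α_{t-1}) eₜ`. -/
theorem stmt_11 (n : ℕ) (hn : 5 ≤ n) (α : ℕ → ℂ) (θ : ℂ)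
    (hleib : ∀ x y z : Fin n → ℂ,
      bracketOf n (F1mul n α θ) (bracketOf n (F1mul n α θ) x y) z =
        bracketOf n (F1mul n α θ) (bracketOf n (F1mul n α θ) x z) y +
        bracketOf n (F1mul n α θ) x (bracketOf n (F1mul n α θ) y z))
    (P : Module.End ℂ (Fin n → ℂ))
    (hP : IsPreDeriv n (bracketOf n (F1mul n α θ)) P)
    (a b : ℕ → ℂ) (ha : P (E n 1) = ∑ t ∈ Icc 1 n, a t • E n t)
    (hb : P (E n 2) = ∑ t ∈ Icc 1 n, b t • E n t) :
    b 1 + b 2 = a 1 + a 2 ∧ (∀ t, 3 ≤ t → t ≤ n - 2 → b t = a t) ∧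
      P (E n 4) = (3 * a 1 + a 2) • E n 4
        + ∑ t ∈ Icc 5 n, (a (t - 2) + 2 * a 2 * α (t - 1)) • E n t :=
  stmt_11_general n hn α θ P hP a b ha hb
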